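/- arXiv:1110.2557 — 3 statements merged into one kernel-verified Lean document; each statement's English description precedes it below -/
import Mathlib

section
/- The number of linearized polynomials over F_q of degree at most ν (i.e., of the form Σ_{i=0}^{ν} a_i x^{p^i}) that are permutation polynomials of F_q is at least (1 - 1/(p-1) + 1/(q(p-1))) · q^{ν+1}, which in turn is at least q^ν. -/
/-!
If `L_a x = ∑ aᵢ x^(p^i)` is not bijective, it has a nonzero root `w`, and its kernel contains the
`p` distinct multiples of `w`. On the other hand, for fixed `x ≠ 0` the equation `L_a x = 0` is a
single nontrivial linear condition on the coefficient vector `a`, with `q^ν` solutions. Counting the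
pairs `(a, x)` with `L_a x = 0` both ways gives
`q^(ν+1) + (p - 1) · #{a | L_a not bijective} ≤ q^(ν+1) + (q - 1) q^ν`.
-/

open Polynomial Function

theorem AddMonoidHom.card_ker_mul_card_of_surjective {G H : Type*} [AddGroup G] [AddGroup H]
    (f : G →+ H) (hf : Surjective f) : Nat.card f.ker * Nat.card H = Nat.card G := by
  rw [← f.ker.card_mul_index, AddSubgroup.index_ker, f.range_eq_top_of_surjective hf,
    AddSubgroup.card_top]

theorem AddMonoidHom.le_card_ker_of_not_injective {R G : Type*} [Ring R] [Finite R] [AddGroup G]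
    (p : ℕ) [Fact p.Prime] [CharP R p] (f : R →+ G) (hf : ¬Injective f) :
    p ≤ Nat.card f.ker := by
  obtain ⟨w, hw, hw0⟩ : ∃ w, f w = 0 ∧ w ≠ 0 := by
    simpa [injective_iff_map_eq_zero] using hf
  have hw_order : addOrderOf w = p := addOrderOf_eq_prime (by simp [nsmul_eq_mul]) hw0
  calc p = Nat.card (AddSubgroup.zmultiples w) := by rw [Nat.card_zmultiples, hw_order]
    _ ≤ Nat.card f.ker := AddSubgroup.card_le_of_le (AddSubgroup.zmultiples_le_of_mem hw)

section Linearized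

variable {F : Type*} [CommRing F] (p : ℕ) [ExpChar F p] {n : ℕ}

def linearizedHom (a : Fin n → F) : F →+ F where
  toFun x := ∑ i, a i * x ^ p ^ (i : ℕ)
  map_zero' := Finset.sum_eq_zero fun i _ => by rw [zero_pow (expChar_pow_pos F p i).ne', mul_zero]
  map_add' x y := by simp only [add_pow_expChar_pow, mul_add, Finset.sum_add_distrib]

theorem linearizedHom_apply (a : Fin n → F) (x : F) :
    linearizedHom p a x = ∑ i, a i * x ^ p ^ (i : ℕ) := rfl

theorem eval_linearized (a : Fin n → F) (x : F) :
    eval x (∑ i, C (a i) * X ^ p ^ (i : ℕ)) = linearizedHom p a x := by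
  simp [eval_finsetSum, linearizedHom_apply]

def linearizedCoeffHom (n : ℕ) (x : F) : (Fin n → F) →+ F where
  toFun a := linearizedHom p a x
  map_zero' := by simp [linearizedHom_apply]
  map_add' a b := by
    simp only [linearizedHom_apply, Pi.add_apply, add_mul, Finset.sum_add_distrib]

theorem linearizedCoeffHom_zero : linearizedCoeffHom p n (0 : F) = 0 :=
  AddMonoidHom.ext fun a => map_zero (linearizedHom p a)

theorem sum_card_ker_linearizedHom_eq_sum_card_ker_linearizedCoeffHom [Fintype F] :
    ∑ a : Fin n → F, Nat.card (linearizedHom p a).ker =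
      ∑ x : F, Nat.card (linearizedCoeffHom p n x).ker := by
  classical
  simp only [Nat.card_eq_fintype_card, Fintype.card_subtype, AddMonoidHom.mem_ker,
    Finset.card_filter]
  exact Finset.sum_comm

end Linearized

section Field

variable {F : Type*} [Field F] (p : ℕ) [ExpChar F p] {n : ℕ}

theorem linearizedCoeffHom_surjective {x : F} (hx : x ≠ 0) :
    Surjective (linearizedCoeffHom p (n + 1) x) := fun y =>
  ⟨Pi.single 0 (y / x), by simp [linearizedCoeffHom, linearizedHom_apply, Pi.single_apply, hx]⟩

theorem card_ker_linearizedCoeffHom [Finite F] {x : F} (hx : x ≠ 0) :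
    Nat.card (linearizedCoeffHom p (n + 1) x).ker = Nat.card F ^ n := by
  have h := (linearizedCoeffHom p (n + 1) x).card_ker_mul_card_of_surjective
    (linearizedCoeffHom_surjective p hx)
  rw [Nat.card_fun, Nat.card_fin, pow_succ] at h
  exact Nat.eq_of_mul_eq_mul_right Nat.card_pos h

theorem sum_card_ker_linearizedHom [Fintype F] :
    ∑ a : Fin (n + 1) → F, Nat.card (linearizedHom p a).ker =
      Nat.card F ^ (n + 1) + (Nat.card F - 1) * Nat.card F ^ n := by
  classical
  rw [sum_card_ker_linearizedHom_eq_sum_card_ker_linearizedCoeffHom,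
    ← Finset.add_sum_erase _ _ (Finset.mem_univ 0),
    Finset.sum_congr rfl fun x hx => card_ker_linearizedCoeffHom p (Finset.ne_of_mem_erase hx),
    Finset.sum_const, Finset.card_erase_of_mem (Finset.mem_univ 0), Finset.card_univ, smul_eq_mul,
    linearizedCoeffHom_zero, AddMonoidHom.ker_zero, AddSubgroup.card_top, Nat.card_fun,
    Nat.card_fin, Nat.card_eq_fintype_card]

theorem ncard_not_bijective_linearizedHom_le [Fintype F] [Fact p.Prime] [CharP F p] :
    (p - 1) * {a : Fin (n + 1) → F | ¬ Bijective (linearizedHom p a)}.ncard ≤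
      (Nat.card F - 1) * Nat.card F ^ n := by
  classical
  have hker (a : Fin (n + 1) → F) :
      1 + (if Bijective (linearizedHom p a) then 0 else p - 1) ≤
        Nat.card (linearizedHom p a).ker := by
    split_ifs with ha
    · exact Nat.card_pos
    · rw [Nat.add_sub_cancel' (Fact.out : p.Prime).one_le]
      exact (linearizedHom p a).le_card_ker_of_not_injective p
        (mt Finite.injective_iff_bijective.mp ha)
  have hsum := Finset.sum_le_sum fun a (_ : a ∈ Finset.univ) => hker a
  rw [sum_card_ker_linearizedHom, Finset.sum_add_distrib, Finset.sum_ite] at hsum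
  simp only [Finset.sum_const, smul_eq_mul, mul_one, mul_zero, zero_add, Finset.card_univ,
    ← Nat.card_eq_fintype_card, Nat.card_fun, Nat.card_fin] at hsum
  rw [Set.ncard_eq_toFinset_card', Set.toFinset_ofPred]
  linarith

end Field

theorem one_sub_div_add_div_mul_pow_succ {P Q : ℝ} (hP : P ≠ 1) (hQ : Q ≠ 0) (ν : ℕ) :
    (1 - 1 / (P - 1) + 1 / (Q * (P - 1))) * Q ^ (ν + 1) =
      Q ^ (ν + 1) - (Q - 1) * Q ^ ν / (P - 1) := by
  have : P - 1 ≠ 0 := sub_ne_zero.mpr hP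
  field_simp
  ring

theorem count_linearized_permutation_polynomials_general
    (p m ν : ℕ) (hp : p.Prime)
    (F : Type) [Field F] [Fintype F] (hcard : Fintype.card F = p ^ m) :
    (1 - 1 / ((p : ℝ) - 1) + 1 / (((p : ℝ) ^ m) * ((p : ℝ) - 1))) * ((p : ℝ) ^ m) ^ (ν + 1) ≤
      ({a : Fin (ν + 1) → F |
          Function.Bijective fun x : F =>
            eval x (∑ i : Fin (ν + 1), C (a i) * X ^ p ^ (i : ℕ))}.ncard : ℝ) ∧
    ((p : ℝ) ^ m) ^ ν ≤
      (1 - 1 / ((p : ℝ) - 1) + 1 / (((p : ℝ) ^ m) * ((p : ℝ) - 1))) * ((p : ℝ) ^ m) ^ (ν + 1) := by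
  have := Fact.mk hp
  have : CharP F p := charP_of_card_eq_prime_pow hcard
  have hP : (2 : ℝ) ≤ p := by exact_mod_cast hp.two_le
  set S := {a : Fin (ν + 1) → F | Bijective (linearizedHom p a)}
  set P : ℝ := (p : ℝ)
  set Q : ℝ := (p : ℝ) ^ m
  have hQ : Q = Nat.card F := by simp [Q, hcard]
  have hQ1 : 1 ≤ Q := one_le_pow₀ (by linarith)
  have hpartition : (S.ncard : ℝ) + Sᶜ.ncard = Q ^ (ν + 1) := by
    rw [hQ]
    exact_mod_cast S.ncard_add_ncard_compl.trans (by simp)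
  have hbad : (P - 1) * Sᶜ.ncard ≤ (Q - 1) * Q ^ ν := by
    have h := Nat.cast_le (α := ℝ).2 (ncard_not_bijective_linearizedHom_le (F := F) (n := ν) p)
    push_cast [Nat.cast_sub hp.one_le, Nat.cast_sub Nat.card_pos] at h
    rwa [hQ]
  simp only [eval_linearized]
  rw [one_sub_div_add_div_mul_pow_succ (by linarith) (by linarith)]
  constructor
  · have := (le_div_iff₀' (by linarith)).2 hbad
    linarith
  · have : (Q - 1) * Q ^ ν / (P - 1) ≤ (Q - 1) * Q ^ ν :=
      div_le_self (by nlinarith [one_le_pow₀ (n := ν) hQ1]) (by linarith)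
    rw [pow_succ]
    nlinarith

/-- The number of linearized polynomials of degree at most `ν` over `F_q`
(`q = p^m`) that are permutation polynomials is at least
`(1 - 1/(p-1) + 1/(q(p-1))) q^{ν+1}`, which is at least `q^ν`. -/
theorem count_linearized_permutation_polynomials
    (p m ν : ℕ) (hp : p.Prime) (hm : 1 ≤ m)
    (F : Type) [Field F] [Fintype F] (hcard : Fintype.card F = p ^ m) :
    (1 - 1 / ((p : ℝ) - 1) + 1 / (((p : ℝ) ^ m) * ((p : ℝ) - 1))) * ((p : ℝ) ^ m) ^ (ν + 1) ≤
      ({a : Fin (ν + 1) → F |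
          Function.Bijective fun x : F =>
            eval x (∑ i : Fin (ν + 1), C (a i) * X ^ p ^ (i : ℕ))}.ncard : ℝ) ∧
    ((p : ℝ) ^ m) ^ ν ≤
      (1 - 1 / ((p : ℝ) - 1) + 1 / (((p : ℝ) ^ m) * ((p : ℝ) - 1))) * ((p : ℝ) ^ m) ^ (ν + 1) :=
  count_linearized_permutation_polynomials_general p m ν hp F hcard
end

section
/- For any two permutations σ₁, σ₂ ∈ S_n, the Kendall tau distance is at least the ℓ₁ distance between their inversion vectors: d_τ(σ₁,σ₂) ≥ Σ_{i=1}^{n-1} |x_{σ₁}(i) - x_{σ₂}(i)|. -/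
/-- `s` is an adjacent transposition: it swaps two adjacent positions. -/
def IsAdjSwap {n : ℕ} (s : Equiv.Perm (Fin n)) : Prop :=
  ∃ i j : Fin n, (j : ℕ) = (i : ℕ) + 1 ∧ s = Equiv.swap i j

/-- The Kendall tau distance: the minimum number of adjacent transpositions needed to
transform `σ` into `π`.  (In the paper's convention, permutations act on the right:
the product `πσ` sends `i ↦ σ(π(i))`, i.e. equals `σ * π` in Mathlib's convention; so
applying an adjacent transposition error `s` to `σ` yields `σ * s`.) -/
noncomputable def kendall {n : ℕ} (σ π : Equiv.Perm (Fin n)) : ℕ :=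
  sInf {k : ℕ | ∃ l : List (Equiv.Perm (Fin n)),
    (∀ s ∈ l, IsAdjSwap s) ∧ l.length = k ∧ π = σ * l.prod}

/-- The inversion vector of `σ`: `invVec σ v` is the number of inversions of `σ` in
which `v` is the larger element, i.e. the number of `j < v` with `σ⁻¹(j) > σ⁻¹(v)`. -/
def invVec {n : ℕ} (σ : Equiv.Perm (Fin n)) (v : Fin n) : ℕ :=
  (Finset.univ.filter (fun j : Fin n => j < v ∧ σ⁻¹ v < σ⁻¹ j)).card

/-!
An adjacent transposition of positions changes the relative order of exactly one pair of
values, namely `{σ i, σ j}`; so it changes the inversion vector in the single coordinate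
`max (σ i) (σ j)`, and there by at most one. The `ℓ₁` distance between inversion vectors
therefore grows by at most one per adjacent transposition and satisfies the triangle
inequality, so along a shortest chain of adjacent transpositions from `σ₁` to `σ₂` it
reaches at most `kendall σ₁ σ₂`.
-/

open Equiv Finset

namespace Equiv.Perm

variable {n : ℕ}

theorem exists_list_isAdjSwap_prod_eq (ρ : Perm (Fin n)) :
    ∃ l : List (Perm (Fin n)), (∀ s ∈ l, IsAdjSwap s) ∧ l.prod = ρ := by
  suffices Submonoid.closure {s : Perm (Fin n) | IsAdjSwap s} = ⊤ from
    Submonoid.exists_list_of_mem_closure (this ▸ Submonoid.mem_top ρ)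
  cases n with
  | zero => exact Subsingleton.elim _ _
  | succ m =>
    rw [eq_top_iff, ← mclosure_swap_castSucc_succ m]
    refine Submonoid.closure_mono ?_
    rintro _ ⟨i, rfl⟩
    exact ⟨i.castSucc, i.succ, by simp, rfl⟩

theorem swap_apply_lt_swap_apply_iff {i j p q : Fin n} (hij : (j : ℕ) = i + 1)
    (hij' : ¬(p = i ∧ q = j)) (hji : ¬(p = j ∧ q = i)) :
    swap i j p < swap i j q ↔ p < q := by
  simp only [swap_apply_def, Fin.lt_def, Fin.ext_iff] at *
  split_ifs <;> omega

theorem lt_and_mul_swap_inv_lt_iff {σ : Perm (Fin n)} {i j x v : Fin n}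
    (hij : (j : ℕ) = i + 1) (hxv : ¬(x = min (σ i) (σ j) ∧ v = max (σ i) (σ j))) :
    (x < v ∧ (σ * swap i j)⁻¹ v < (σ * swap i j)⁻¹ x) ↔ (x < v ∧ σ⁻¹ v < σ⁻¹ x) := by
  simp only [mul_inv_rev, swap_inv, mul_apply]
  refine and_congr_right fun hlt => swap_apply_lt_swap_apply_iff hij ?_ ?_
  · rintro ⟨hv, hx⟩
    rw [inv_eq_iff_eq] at hv hx
    subst hv hx
    exact hxv ⟨(min_eq_right hlt.le).symm, (max_eq_left hlt.le).symm⟩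
  · rintro ⟨hv, hx⟩
    rw [inv_eq_iff_eq] at hv hx
    subst hv hx
    exact hxv ⟨(min_eq_left hlt.le).symm, (max_eq_right hlt.le).symm⟩

end Equiv.Perm

theorem Finset.natAbs_card_sub_card_le_one {α : Type*} [DecidableEq α] {A B : Finset α} (a : α)
    (h : ∀ x ≠ a, x ∈ A ↔ x ∈ B) : ((#A : ℤ) - #B).natAbs ≤ 1 := by
  have hAB : A ⊆ insert a B := fun x hx => by
    by_cases hxa : x = a
    · exact hxa ▸ mem_insert_self a B
    · exact mem_insert_of_mem ((h x hxa).1 hx)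
  have hBA : B ⊆ insert a A := fun x hx => by
    by_cases hxa : x = a
    · exact hxa ▸ mem_insert_self a A
    · exact mem_insert_of_mem ((h x hxa).2 hx)
  have := (card_le_card hAB).trans (card_insert_le a B)
  have := (card_le_card hBA).trans (card_insert_le a A)
  omega

section InversionDistance

variable {n : ℕ}

def invDist (σ π : Perm (Fin n)) : ℕ :=
  ∑ v, ((invVec σ v : ℤ) - invVec π v).natAbs

theorem invDist_comm (σ π : Perm (Fin n)) : invDist σ π = invDist π σ := by
  refine sum_congr rfl fun v _ => ?_
  rw [← Int.natAbs_neg, neg_sub]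

theorem invDist_triangle (σ π ρ : Perm (Fin n)) :
    invDist σ ρ ≤ invDist σ π + invDist π ρ := by
  rw [invDist, invDist, invDist, ← sum_add_distrib]
  refine sum_le_sum fun v _ => ?_
  simpa using Int.natAbs_add_le ((invVec σ v : ℤ) - invVec π v) (invVec π v - invVec ρ v)

theorem invVec_mul_swap_eq_of_ne_max {σ : Perm (Fin n)} {i j v : Fin n}
    (hij : (j : ℕ) = i + 1) (hv : v ≠ max (σ i) (σ j)) :
    invVec (σ * swap i j) v = invVec σ v := by
  unfold invVec
  congr 1
  exact filter_congr fun x _ => Perm.lt_and_mul_swap_inv_lt_iff hij fun h => hv h.2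

theorem natAbs_invVec_mul_swap_sub_le_one (σ : Perm (Fin n)) {i j : Fin n}
    (hij : (j : ℕ) = i + 1) (v : Fin n) :
    ((invVec (σ * swap i j) v : ℤ) - invVec σ v).natAbs ≤ 1 := by
  refine natAbs_card_sub_card_le_one (min (σ i) (σ j)) fun x hx => ?_
  simp only [mem_filter, mem_univ, true_and]
  exact Perm.lt_and_mul_swap_inv_lt_iff hij fun h => hx h.1

theorem invDist_mul_le_one {s : Perm (Fin n)} (hs : IsAdjSwap s) (σ : Perm (Fin n)) :
    invDist σ (σ * s) ≤ 1 := by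
  obtain ⟨i, j, hij, rfl⟩ := hs
  rw [invDist_comm, invDist, sum_eq_single (max (σ i) (σ j))]
  · exact natAbs_invVec_mul_swap_sub_le_one σ hij _
  · intro v _ hv
    rw [invVec_mul_swap_eq_of_ne_max hij hv, sub_self, Int.natAbs_zero]
  · exact fun h => absurd (mem_univ _) h

theorem invDist_mul_prod_le_length {l : List (Perm (Fin n))} (hl : ∀ s ∈ l, IsAdjSwap s)
    (σ : Perm (Fin n)) : invDist σ (σ * l.prod) ≤ l.length := by
  induction l generalizing σ with
  | nil => simp [invDist]
  | cons s l ih =>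
    rw [List.prod_cons, ← mul_assoc, List.length_cons, add_comm]
    calc invDist σ (σ * s * l.prod)
        ≤ invDist σ (σ * s) + invDist (σ * s) (σ * s * l.prod) := invDist_triangle _ _ _
      _ ≤ 1 + l.length :=
        add_le_add (invDist_mul_le_one (hl s List.mem_cons_self) σ)
          (ih (fun t ht => hl t (List.mem_cons_of_mem s ht)) _)

end InversionDistance

/-- The Kendall tau distance between two permutations is at least the `ℓ₁` distance
between their inversion vectors. -/
theorem kendall_ge_l1_of_inversion_vectors
    (n : ℕ) (σ₁ σ₂ : Equiv.Perm (Fin n)) :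
    ∑ v : Fin n, ((invVec σ₁ v : ℤ) - (invVec σ₂ v : ℤ)).natAbs ≤ kendall σ₁ σ₂ := by
  change invDist σ₁ σ₂ ≤ kendall σ₁ σ₂
  obtain ⟨l, hl, hprod⟩ := Perm.exists_list_isAdjSwap_prod_eq (σ₁⁻¹ * σ₂)
  refine le_csInf ⟨l.length, l, hl, rfl, by rw [hprod, mul_inv_cancel_left]⟩ ?_
  rintro k ⟨l, hl, rfl, rfl⟩
  exact invDist_mul_prod_le_length hl σ₁
end

section
/- Minimum-cost error distribution: let q ≥ 2, t ≥ 0 be integers and s = ⌊(t+1)/(2(q-1))⌋. Then the minimum of Σ_{j=1}^{l-1} j·t_j over nonnegative integers t_j with t_j ≤ 2(q-1) for all j and Σ_j t_j ≥ t+1 (assuming l large enough that a feasible point exists, e.g. 2(q-1)(l-1) ≥ t+1) equals (t+1 − (q-1)s)(s+1). -/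
/-!
For `0 ≤ x ≤ m` and any threshold `k`, a slot of weight `j` satisfies
`(k + 1) x ≤ j x + (k + 1 - j) m`; summing over the slots bounds the cost of every feasible
distribution of `n` errors from below by `(k + 1) n - m ∑ⱼ (k + 1 - j)⁺`. For `k = ⌊n / m⌋` the
greedy distribution (`m` errors in each of the slots `1, …, k` and the remaining `n mod m` in slot
`k + 1`) is tight in every slot, so the bound is the minimum; with `m = 2(q - 1)` and
`∑ⱼ (k + 1 - j)⁺ = k(k + 1)/2` it becomes `(t + 1 - (q - 1)s)(s + 1)`.
-/

open Finset

-- Truncated subtraction makes this `0` once the demand `n` is used up by the earlier slots.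
def greedyFill (m n j : ℕ) : ℕ := min m (n - m * (j - 1))

theorem sum_greedyFill (m n L : ℕ) : ∑ j ∈ Icc 1 L, greedyFill m n j = min n (m * L) := by
  induction L with
  | zero => simp
  | succ L ih =>
    rw [sum_Icc_succ_top (by omega), ih, greedyFill, Nat.add_sub_cancel, Nat.mul_succ]
    omega

theorem succ_mul_le_mul_add_tsub_mul {x m : ℕ} (hx : x ≤ m) (j k : ℕ) :
    (k + 1) * x ≤ j * x + (k + 1 - j) * m := by
  rcases le_total j (k + 1) with hj | hj
  · calc (k + 1) * x = j * x + (k + 1 - j) * x := by rw [← add_mul, Nat.add_sub_cancel' hj]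
      _ ≤ j * x + (k + 1 - j) * m := by gcongr
  · calc (k + 1) * x ≤ j * x := by gcongr
      _ ≤ j * x + (k + 1 - j) * m := Nat.le_add_right _ _

theorem div_succ_mul_greedyFill {m : ℕ} (hm : 0 < m) (n : ℕ) {j : ℕ} (hj : 1 ≤ j) :
    (n / m + 1) * greedyFill m n j = j * greedyFill m n j + (n / m + 1 - j) * m := by
  have hlow : m * (n / m) ≤ n := Nat.mul_div_le n m
  have hhigh : n < m * (n / m + 1) := Nat.lt_mul_div_succ n hm
  rcases lt_trichotomy j (n / m + 1) with hlt | rfl | hgt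
  · have hfull : greedyFill m n j = m := by
      have : m * (j - 1) + m ≤ n := by
        rw [← Nat.mul_succ]
        exact le_trans (Nat.mul_le_mul_left m (by omega)) hlow
      exact min_eq_left (by omega)
    rw [hfull, ← add_mul, Nat.add_sub_cancel' hlt.le]
  · simp
  · have hempty : greedyFill m n j = 0 := by
      have : m * (n / m + 1) ≤ m * (j - 1) := Nat.mul_le_mul_left m (by omega)
      simp only [greedyFill]
      omega
    simp [hempty, Nat.sub_eq_zero_of_le hgt.le]

theorem isLeast_weighted_sum {m n L : ℕ} (hm : 0 < m) (hn : n ≤ m * L) :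
    IsLeast
      {c : ℕ | ∃ x : ℕ → ℕ, (∀ j ∈ Icc 1 L, x j ≤ m) ∧ n ≤ ∑ j ∈ Icc 1 L, x j ∧
        c = ∑ j ∈ Icc 1 L, j * x j}
      ((n / m + 1) * n - m * ∑ j ∈ Icc 1 L, (n / m + 1 - j)) := by
  set k := n / m
  constructor
  · have hsum : ∑ j ∈ Icc 1 L, greedyFill m n j = n := by rw [sum_greedyFill, min_eq_left hn]
    have hcost : (k + 1) * n = ∑ j ∈ Icc 1 L, j * greedyFill m n j
        + m * ∑ j ∈ Icc 1 L, (k + 1 - j) := by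
      conv_lhs => rw [← hsum]
      rw [mul_sum, mul_sum, ← sum_add_distrib]
      refine sum_congr rfl fun j hj => ?_
      rw [mul_comm m]
      exact div_succ_mul_greedyFill hm n (mem_Icc.1 hj).1
    exact ⟨greedyFill m n, fun j _ => min_le_left _ _, hsum.ge, by omega⟩
  · rintro c ⟨x, hx, hsum, rfl⟩
    have hbound : (k + 1) * ∑ j ∈ Icc 1 L, x j
        ≤ ∑ j ∈ Icc 1 L, j * x j + m * ∑ j ∈ Icc 1 L, (k + 1 - j) := by
      rw [mul_sum, mul_sum, ← sum_add_distrib]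
      refine sum_le_sum fun j hj => ?_
      rw [mul_comm m]
      exact succ_mul_le_mul_add_tsub_mul (hx j hj) j k
    have := Nat.mul_le_mul_left (k + 1) hsum
    omega

theorem two_mul_sum_Icc_tsub {k L : ℕ} (hk : k ≤ L) :
    2 * ∑ j ∈ Icc 1 L, (k + 1 - j) = k * (k + 1) := by
  have hreflect : ∑ j ∈ Icc 1 L, (k + 1 - j) = ∑ i ∈ range (k + 1), i := by
    refine sum_bij_ne_zero (fun j _ _ => k + 1 - j) ?_ ?_ ?_ fun _ _ _ => rfl
    · intro j hj _
      simp only [mem_Icc, mem_range] at hj ⊢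
      omega
    · intro a _ ha b _ hb h
      omega
    · intro i hi hi0
      simp only [mem_range] at hi
      exact ⟨k + 1 - i, mem_Icc.2 ⟨by omega, by omega⟩, by omega, by omega⟩
  rw [hreflect, mul_comm, sum_range_id_mul_two, Nat.add_sub_cancel, mul_comm]

/-- Minimum-cost error distribution: for integers `q ≥ 2`, `t ≥ 0`, with
`s = ⌊(t+1)/(2(q-1))⌋`, the minimum of `∑_{j=1}^{l-1} j·t_j` over nonnegative integers
`t_j ≤ 2(q-1)` with `∑_j t_j ≥ t+1` (assuming feasibility, `2(q-1)(l-1) ≥ t+1`)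
equals `(t+1 − (q-1)s)(s+1)`. -/
theorem min_cost_error_distribution
    (q t l : ℕ) (hq : 2 ≤ q) (hfeas : t + 1 ≤ 2 * (q - 1) * (l - 1)) :
    IsLeast
      {c : ℕ | ∃ tj : ℕ → ℕ,
        (∀ j ∈ Finset.Icc 1 (l - 1), tj j ≤ 2 * (q - 1)) ∧
        (t + 1 ≤ ∑ j ∈ Finset.Icc 1 (l - 1), tj j) ∧
        c = ∑ j ∈ Finset.Icc 1 (l - 1), j * tj j}
      ((t + 1 - (q - 1) * ((t + 1) / (2 * (q - 1)))) * ((t + 1) / (2 * (q - 1)) + 1)) := by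
  have hm : 0 < 2 * (q - 1) := by omega
  convert isLeast_weighted_sum hm hfeas using 1
  set s := (t + 1) / (2 * (q - 1))
  have hsL : s ≤ l - 1 := Nat.div_le_of_le_mul hfeas
  rw [mul_comm 2 (q - 1), mul_assoc, two_mul_sum_Icc_tsub hsL, Nat.sub_mul]
  ring_nf
end
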